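/- Let V be a D(ℝ)-submodule of D(ℝ)^(n), let v ∈ V with v ∉ G₀^(n), let α ∈ T be a tangible scalar and w ∈ V, and suppose v ⊨ αv + w. Then α ≤_ν 𝟙 (the value of α is at most that of the multiplicative identity); moreover, if α <_ν 𝟙, then v ⊨ w. -/

import Mathlib

/-! Write `v = (α • v + w) + u` with `u` ghost and read it coordinatewise:
`v j = α v j + (w j + u j)`. At a coordinate with `v j ≠ -∞` the value of the right side is at
least `|α| + |v j|`, forcing `|α| ≤ 0`; and when `|α| < 0` the summand `α v j` is strictly
dominated by `v j`, so it is absorbed and `v j = w j + u j`. -/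

noncomputable section

/-- The extended tropical semifield `D(ℝ)`: `bot` is `-∞`; `nb g r` is the element of
underlying value `r : ℝ`, ghost if `g = true`, tangible if `g = false`. -/
inductive DR : Type where
  | bot : DR
  | nb : Bool → ℝ → DR

namespace DR

/-- Supertropical addition on `D(ℝ)`. -/
def add : DR → DR → DR
  | bot, y => y
  | x, bot => x
  | nb b r, nb c s => if r < s then nb c s else if s < r then nb b r else nb true r

/-- Supertropical multiplication on `D(ℝ)`. -/
def mul : DR → DR → DR
  | bot, _ => bot
  | _, bot => bot
  | nb b r, nb c s => nb (b || c) (r + s)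

theorem bot_add (x : DR) : add bot x = x := by cases x <;> rfl

theorem add_bot (x : DR) : add x bot = x := by cases x <;> rfl

theorem bot_mul (x : DR) : mul bot x = bot := by cases x <;> rfl

theorem mul_bot (x : DR) : mul x bot = bot := by cases x <;> rfl

theorem add_comm' (x y : DR) : add x y = add y x := by
  cases x <;> cases y <;> (try rfl)
  simp only [add]
  split_ifs <;>
    first
      | rfl
      | (exfalso; linarith)
      | (congr 1 <;> first | rfl | linarith)

theorem add_assoc' (x y z : DR) : add (add x y) z = add x (add y z) := by
  cases x with
  | bot => rw [bot_add, bot_add]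
  | nb b r =>
    cases y with
    | bot => rw [add_bot, bot_add]
    | nb c s =>
      cases z with
      | bot => rw [add_bot, add_bot]
      | nb d t =>
        simp only [add]
        split_ifs <;>
          simp only [add] <;>
          (try split_ifs) <;>
          first
            | rfl
            | (exfalso; linarith)
            | (congr 1 <;> first | rfl | linarith)

theorem mul_comm' (x y : DR) : mul x y = mul y x := by
  cases x <;> cases y <;> (try rfl)
  simp [mul, Bool.or_comm, add_comm]

theorem mul_assoc' (x y z : DR) : mul (mul x y) z = mul x (mul y z) := by
  cases x <;> cases y <;> cases z <;> (try rfl) <;>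
    simp [mul, Bool.or_assoc, add_assoc]

theorem one_mul' (x : DR) : mul (nb false 0) x = x := by
  cases x <;> simp [mul]

theorem left_distrib' (x y z : DR) : mul x (add y z) = add (mul x y) (mul x z) := by
  cases x with
  | bot => simp [bot_mul, bot_add]
  | nb b r =>
    cases y with
    | bot => simp [bot_add, mul_bot]
    | nb c s =>
      cases z with
      | bot => simp [add_bot, mul_bot]
      | nb d t =>
        simp only [mul, add]
        split_ifs <;>
          simp only [mul, add, Bool.or_true, Bool.true_or] <;>
          (try split_ifs) <;>
          first
            | rfl
            | (exfalso; linarith)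
            | (congr 1 <;> first | rfl | linarith)

theorem right_distrib' (x y z : DR) : mul (add x y) z = add (mul x z) (mul y z) := by
  rw [mul_comm' (add x y) z, left_distrib', mul_comm' z x, mul_comm' z y]

instance : Add DR := ⟨add⟩
instance : Zero DR := ⟨bot⟩
instance : Mul DR := ⟨mul⟩
instance : One DR := ⟨nb false 0⟩

instance : AddCommMonoid DR where
  add := add
  add_assoc := add_assoc'
  zero := bot
  zero_add := bot_add
  add_zero := add_bot
  add_comm := add_comm'
  nsmul := nsmulRec

instance : CommMonoid DR where
  mul := mul
  mul_assoc := mul_assoc'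
  one := nb false 0
  one_mul := one_mul'
  mul_one := fun x => by show mul x (nb false 0) = x; rw [mul_comm']; exact one_mul' x
  mul_comm := mul_comm'
  npow := npowRec

instance : CommSemiring DR where
  __ := (inferInstance : AddCommMonoid DR)
  __ := (inferInstance : CommMonoid DR)
  left_distrib := left_distrib'
  right_distrib := right_distrib'
  zero_mul := bot_mul
  mul_zero := mul_bot

/-- The ghost ideal `G₀ = ℝ^ν ∪ {-∞}` as a predicate. -/
def IsGhost : DR → Prop
  | bot => True
  | nb b _ => b = true

/-- The tangible elements `T = ℝ` as a predicate. -/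
def Tangible : DR → Prop
  | nb false _ => True
  | _ => False

/-- Membership in `T ∪ {-∞}`. -/
def TangibleOrBot (x : DR) : Prop := x = bot ∨ Tangible x

/-- The underlying value in `ℝ ∪ {-∞}`. -/
def val : DR → WithBot ℝ
  | bot => ⊥
  | nb _ r => (r : WithBot ℝ)

/-- `x ≤_ν y` : comparison of underlying values, `-∞` smallest. -/
def nuLe (x y : DR) : Prop := val x ≤ val y

/-- `x <_ν y` : strict comparison of underlying values, `-∞` smallest. -/
def nuLt (x y : DR) : Prop := val x < val y

/-- The tangible lift `x̂` of `x` (with `hat bot = bot`). -/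
def hat : DR → DR
  | bot => bot
  | nb _ r => nb false r

/-- The ghost map `ν`. -/
def nu : DR → DR
  | bot => bot
  | nb _ r => nb true r

/-- The ghost-surpass relation `x ⊨ y` on `D(ℝ)`. -/
def GhostSurp (x y : DR) : Prop := ∃ c : DR, IsGhost c ∧ x = y + c

end DR

open DR

/-- A vector in `D(ℝ)^(n)` lies in the ghost submodule `G₀^(n)`. -/
def GhostVec {n : ℕ} (v : Fin n → DR) : Prop := ∀ j, IsGhost (v j)

/-- A tangible vector: all entries in `T ∪ {-∞}`. -/
def TangibleVec {n : ℕ} (v : Fin n → DR) : Prop := ∀ j, TangibleOrBot (v j)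

/-- The ghost-surpass relation `v ⊨ w` on vectors. -/
def GhostSurpVec {n : ℕ} (v w : Fin n → DR) : Prop :=
  ∃ u : Fin n → DR, GhostVec u ∧ v = w + u

/-- A family of vectors is tropically dependent. -/
def TropDep {ι : Type*} [Fintype ι] {n : ℕ} (w : ι → Fin n → DR) : Prop :=
  ∃ I : Finset ι, I.Nonempty ∧ ∃ α : ι → DR, (∀ i ∈ I, Tangible (α i)) ∧
    ∀ j : Fin n, IsGhost (∑ i ∈ I, α i * w i j)

/-- A family of vectors is tropically independent. -/
def TropIndep {ι : Type*} [Fintype ι] {n : ℕ} (w : ι → Fin n → DR) : Prop := ¬ TropDep w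

/-- A set of vectors is tropically dependent. -/
def SetTropDep {n : ℕ} (S : Set (Fin n → DR)) : Prop :=
  ∃ I : Finset (Fin n → DR), ↑I ⊆ S ∧ I.Nonempty ∧
    ∃ α : (Fin n → DR) → DR, (∀ w ∈ I, Tangible (α w)) ∧
      ∀ j : Fin n, IsGhost (∑ w ∈ I, α w * w j)

/-- A set of vectors is tropically independent. -/
def SetTropIndep {n : ℕ} (S : Set (Fin n → DR)) : Prop := ¬ SetTropDep S

/-- A d-base of `V`: a maximal tropically independent subset of `V`. -/
def IsDBase {n : ℕ} (V S : Set (Fin n → DR)) : Prop :=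
  S ⊆ V ∧ SetTropIndep S ∧ ∀ S', S ⊆ S' → S' ⊆ V → SetTropIndep S' → S' = S

/-- The rank of `V`: the maximal number of elements of a d-base of `V`. -/
noncomputable def trank {n : ℕ} (V : Set (Fin n → DR)) : ℕ :=
  sSup {m | ∃ S, IsDBase V S ∧ S.Finite ∧ S.ncard = m}

/-- `v` is tropically spanned by `S`. -/
def SpannedBy {n : ℕ} (S : Set (Fin n → DR)) (v : Fin n → DR) : Prop :=
  ∃ I : Finset (Fin n → DR), ↑I ⊆ S ∧ I.Nonempty ∧
    ∃ α : (Fin n → DR) → DR, (∀ w ∈ I, Tangible (α w)) ∧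
      GhostSurpVec v (fun j => ∑ w ∈ I, α w * w j)

/-- The tropical determinant (permanent) of a square matrix over `D(ℝ)`. -/
noncomputable def tperm {k : ℕ} (A : Matrix (Fin k) (Fin k) DR) : DR :=
  ∑ π : Equiv.Perm (Fin k), ∏ i, A (π i) i

namespace DR

theorem val_add (x y : DR) : (x + y).val = max x.val y.val := by
  show (add x y).val = _
  cases x <;> cases y <;> simp only [add, val, bot_le, max_eq_left, max_eq_right]
  case nb.nb b r c s =>
    split_ifs <;> simp only [← WithBot.coe_max, WithBot.coe_inj] <;> grind

theorem val_mul (x y : DR) : (x * y).val = x.val + y.val := by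
  show (mul x y).val = _
  cases x <;> cases y <;> simp [mul, val]

theorem val_one : val 1 = 0 := rfl

theorem val_ne_bot {x : DR} (hx : x ≠ 0) : x.val ≠ ⊥ := by
  cases x with
  | bot => exact absurd rfl hx
  | nb b r => exact WithBot.coe_ne_bot

theorem add_eq_right_of_nuLt {x y : DR} (h : nuLt x y) : x + y = y := by
  show add x y = y
  cases x with
  | bot => exact bot_add y
  | nb b r =>
    cases y with
    | bot => exact absurd h not_lt_bot
    | nb c s => simp [add, WithBot.coe_lt_coe.mp h]

theorem nuLe_left_of_eq_add {x y z : DR} (h : x = y + z) : nuLe y x := by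
  rw [nuLe, h, val_add]
  exact le_max_left _ _

theorem eq_right_of_eq_add_of_nuLt {x y z : DR} (h : x = y + z) (hy : nuLt y x) : x = z := by
  have hz : nuLt y z := by
    have hx : x.val = max y.val z.val := by rw [h, val_add]
    rcases max_choice y.val z.val with hm | hm
    · exact absurd (hx.trans hm) hy.ne'
    · rwa [nuLt, ← hx.trans hm]
  rwa [add_eq_right_of_nuLt hz] at h

theorem nuLe_mul_self_iff {α x : DR} (hx : x ≠ 0) : nuLe (α * x) x ↔ nuLe α 1 := by
  rw [nuLe, nuLe, val_mul, val_one]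
  simpa only [zero_add] using WithBot.add_le_add_iff_right (x := α.val) (y := 0) (val_ne_bot hx)

theorem nuLt_mul_self_iff {α x : DR} (hx : x ≠ 0) : nuLt (α * x) x ↔ nuLt α 1 := by
  rw [nuLt, nuLt, val_mul, val_one]
  simpa only [zero_add] using WithBot.add_lt_add_iff_right (x := α.val) (y := 0) (val_ne_bot hx)

theorem eq_of_eq_mul_add_of_nuLt_one {α x y : DR} (hα : nuLt α 1) (h : x = α * x + y) :
    x = y := by
  by_cases hx : x = 0
  · rwa [hx, mul_zero, zero_add, ← hx] at h
  · exact eq_right_of_eq_add_of_nuLt h ((nuLt_mul_self_iff hx).mpr hα)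

end DR

theorem ghost_surpass_smul_self_general (n : ℕ)
    (v w : Fin n → DR) (hvg : ¬ GhostVec v)
    (α : DR) (h : GhostSurpVec v (α • v + w)) :
    nuLe α 1 ∧ (nuLt α 1 → GhostSurpVec v w) := by
  obtain ⟨u, hu, hvu⟩ := h
  have hcoord : ∀ j, v j = α * v j + (w j + u j) := fun j => by
    simpa only [Pi.add_apply, Pi.smul_apply, smul_eq_mul, add_assoc] using congrFun hvu j
  constructor
  · obtain ⟨j, hj⟩ := not_forall.mp hvg
    have hvj : v j ≠ 0 := fun h0 => hj (h0 ▸ trivial)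
    exact (nuLe_mul_self_iff hvj).mp (nuLe_left_of_eq_add (hcoord j))
  · exact fun hα => ⟨u, hu, funext fun j => eq_of_eq_mul_add_of_nuLt_one hα (hcoord j)⟩

/-- If a non-ghost `v ∈ V` satisfies `v ⊨ α • v + w` with `α` tangible, then
`α ≤_ν 𝟙`; and if moreover `α <_ν 𝟙`, then `v ⊨ w`. -/
theorem ghost_surpass_smul_self (n : ℕ) (V : Submodule DR (Fin n → DR))
    (v w : Fin n → DR) (hv : v ∈ V) (hw : w ∈ V) (hvg : ¬ GhostVec v)
    (α : DR) (hα : Tangible α) (h : GhostSurpVec v (α • v + w)) :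
    nuLe α 1 ∧ (nuLt α 1 → GhostSurpVec v w) :=
  ghost_surpass_smul_self_general n v w hvg α h
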